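/- Let A = R[x,y]/(xy - t^l), and for i+j = i'+j' = l with i+i' > l define the map E_{i,j} ⊗_A E_{i',j'} → E_{\overline{i+i'},\overline{j+j'}} on generators by ζ₁⊗ξ₁ ↦ x ν₁, ζ₁⊗ξ₂ ↦ t^{j'} ν₁, ζ₂⊗ξ₁ ↦ t^{j} ν₁, ζ₂⊗ξ₂ ↦ ν₂. Then this assignment is compatible with the defining relations of E_{i,j}, E_{i',j'}, and E_{\overline{i+i'},\overline{j+j'}}, and hence defines an A-module homomorphism. -/

import Mathlib

/-!
The assignment is induced by the bilinear product on the free module `A²` with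
`e₁e₁ = x e₁`, `e₁e₂ = t^{j'} e₁`, `e₂e₁ = t^j e₁`, `e₂e₂ = e₂`. It descends to
`E_{i,j} ⊗ E_{i',j'}` because multiplying a relation of either factor by anything lands in the
relations of the target: `(t^j, -x)·q = q₂ (t^{j+j'}, -x)`, and, since `xy = t^l = t^i t^j` and
`t^{j'} t^{i+i'-l} = t^i`, `(y, -t^i)·q = q₂ t^{j'} (y, -t^{i+i'-l})`. The product is symmetric
up to swapping `j` and `j'`, so the second factor is handled by the same computation.
-/

set_option synthInstance.maxHeartbeats 1000000
set_option maxHeartbeats 1000000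

open MvPolynomial TensorProduct

namespace stmt12

variable (R : Type*) [CommRing R] (t : R) (l : ℕ)

/-- `A = R[x,y]/(xy - t^l)`, with `x = X 0`, `y = X 1`. -/
noncomputable abbrev A := MvPolynomial (Fin 2) R ⧸
  Ideal.span {(X 0 * X 1 - C (t ^ l) : MvPolynomial (Fin 2) R)}

noncomputable def x : A R t l := Ideal.Quotient.mk _ (X 0)
noncomputable def y : A R t l := Ideal.Quotient.mk _ (X 1)
noncomputable def tA : A R t l := Ideal.Quotient.mk _ (C t)

/-- `E a b` is the `A`-module with two generators and relations
`t^b·(first) = x·(second)` and `t^a·(second) = y·(first)`. -/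
noncomputable def E (a b : ℕ) :=
  (A R t l × A R t l) ⧸
    (Submodule.span (A R t l) {((tA R t l ^ b, -(x R t l)) : A R t l × A R t l),
      ((y R t l, -(tA R t l ^ a)) : A R t l × A R t l)})

noncomputable instance (a b : ℕ) : AddCommGroup (E R t l a b) :=
  Submodule.Quotient.addCommGroup _

noncomputable instance (a b : ℕ) : Module (A R t l) (E R t l a b) :=
  Submodule.Quotient.module _

/-- first generator of `E a b` -/
noncomputable def gen₁ (a b : ℕ) : E R t l a b := Submodule.Quotient.mk (1, 0)
/-- second generator of `E a b` -/
noncomputable def gen₂ (a b : ℕ) : E R t l a b := Submodule.Quotient.mk (0, 1)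

theorem x_mul_y : x R t l * y R t l = tA R t l ^ l := by
  have h : (Ideal.Quotient.mk (Ideal.span {(X 0 * X 1 - C (t ^ l) : MvPolynomial (Fin 2) R)})
      (X 0 * X 1 - C (t ^ l))) = 0 :=
    Ideal.Quotient.eq_zero_iff_mem.mpr (Ideal.subset_span rfl)
  rw [map_sub, map_mul, sub_eq_zero] at h
  calc x R t l * y R t l = Ideal.Quotient.mk _ (C (t ^ l)) := h
    _ = tA R t l ^ l := by rw [tA, ← map_pow, ← C_pow]

noncomputable def rels (a b : ℕ) : Submodule (A R t l) (A R t l × A R t l) :=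
  Submodule.span (A R t l) {((tA R t l ^ b, -(x R t l)) : A R t l × A R t l),
    ((y R t l, -(tA R t l ^ a)) : A R t l × A R t l)}

section

variable {S : Type*} [CommRing S] (u a b : S)

noncomputable def pairMul : S × S →ₗ[S] S × S →ₗ[S] S × S :=
  LinearMap.mk₂ S (fun p q => (p.1 * q.1 * u + p.1 * q.2 * a + p.2 * q.1 * b, p.2 * q.2))
    (fun _ _ _ => by ext <;> (dsimp; ring))
    (fun _ _ _ => by ext <;> (dsimp [smul_eq_mul]; ring))
    (fun _ _ _ => by ext <;> (dsimp; ring))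
    (fun _ _ _ => by ext <;> (dsimp [smul_eq_mul]; ring))

@[simp]
theorem pairMul_apply (p q : S × S) :
    pairMul u a b p q = (p.1 * q.1 * u + p.1 * q.2 * a + p.2 * q.1 * b, p.2 * q.2) :=
  rfl

theorem pairMul_flip : (pairMul u a b).flip = pairMul u b a := by
  refine LinearMap.ext fun p => LinearMap.ext fun q => Prod.ext ?_ ?_ <;>
    simp only [LinearMap.flip_apply, pairMul_apply] <;> ring

end

section

variable {R t l}

theorem rels_le_ker_pairMul {i j j' k b : ℕ} (hij : i + j = l) (hk : j' + k = i)
    (hb : j + j' = b) :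
    rels R t l i j ≤ LinearMap.ker
      ((pairMul (x R t l) (tA R t l ^ j') (tA R t l ^ j)).compr₂ (rels R t l k b).mkQ) := by
  have rel₁ : ((tA R t l ^ b, -(x R t l)) : A R t l × A R t l) ∈ rels R t l k b :=
    Submodule.subset_span (by simp)
  have rel₂ : ((y R t l, -(tA R t l ^ k)) : A R t l × A R t l) ∈ rels R t l k b :=
    Submodule.subset_span (by simp)
  have hpow_l : tA R t l ^ i * tA R t l ^ j = tA R t l ^ l := by rw [← pow_add, hij]
  have hpow_i : tA R t l ^ j' * tA R t l ^ k = tA R t l ^ i := by rw [← pow_add, hk]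
  rw [rels, Submodule.span_le, Set.insert_subset_iff, Set.singleton_subset_iff]
  simp only [SetLike.mem_coe, LinearMap.mem_ker]
  refine ⟨LinearMap.ext fun q => ?_, LinearMap.ext fun q => ?_⟩ <;>
    simp only [LinearMap.zero_apply, LinearMap.compr₂_apply,
      Submodule.mkQ_apply, Submodule.Quotient.mk_eq_zero, pairMul_apply]
  · convert Submodule.smul_mem _ q.2 rel₁ using 1
    ext <;> simp only [Prod.smul_mk, smul_eq_mul, ← hb, pow_add] <;> ring
  · convert Submodule.smul_mem _ (q.2 * tA R t l ^ j') rel₂ using 1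
    ext <;> simp only [Prod.smul_mk, smul_eq_mul]
    · linear_combination q.1 * x_mul_y R t l - q.1 * hpow_l
    · linear_combination q.2 * hpow_i

end

/-- for `i+j = i'+j' = l` and `i+i' > l`, the assignment
`ζ₁⊗ξ₁ ↦ x ν₁`, `ζ₁⊗ξ₂ ↦ t^{j'} ν₁`, `ζ₂⊗ξ₁ ↦ t^{j} ν₁`, `ζ₂⊗ξ₂ ↦ ν₂` is compatible
with the defining relations, i.e. it defines an `A`-module homomorphism
`E_{i,j} ⊗_A E_{i',j'} → E_{i+i'-l, j+j'}` (note `\overline{i+i'} = i+i'-l` and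
`\overline{j+j'} = j+j'`). -/
theorem stmt12 (i j i' j' : ℕ) (hij : i + j = l) (hij' : i' + j' = l) (h : i + i' > l) :
    ∃ f : (E R t l i j) ⊗[A R t l] (E R t l i' j') →ₗ[A R t l] E R t l (i + i' - l) (j + j'),
      f (gen₁ R t l i j ⊗ₜ gen₁ R t l i' j') = x R t l • gen₁ R t l (i + i' - l) (j + j') ∧
      f (gen₁ R t l i j ⊗ₜ gen₂ R t l i' j') = tA R t l ^ j' • gen₁ R t l (i + i' - l) (j + j') ∧
      f (gen₂ R t l i j ⊗ₜ gen₁ R t l i' j') = tA R t l ^ j • gen₁ R t l (i + i' - l) (j + j') ∧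
      f (gen₂ R t l i j ⊗ₜ gen₂ R t l i' j') = gen₂ R t l (i + i' - l) (j + j') := by
  let Φ := (pairMul (x R t l) (tA R t l ^ j') (tA R t l ^ j)).compr₂
    (rels R t l (i + i' - l) (j + j')).mkQ
  have hleft : rels R t l i j ≤ LinearMap.ker Φ := rels_le_ker_pairMul hij (by omega) rfl
  have hright : rels R t l i' j' ≤ LinearMap.ker Φ.flip := by
    have := rels_le_ker_pairMul (R := R) (t := t) hij' (show j + (i + i' - l) = i' by omega)
      (add_comm j' j)
    rwa [← pairMul_flip (x R t l) (tA R t l ^ j')] at this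
  refine ⟨TensorProduct.lift (Φ.liftQ₂ (rels R t l i j) (rels R t l i' j') hleft hright),
    ?_, ?_, ?_, ?_⟩
  all_goals
    refine (TensorProduct.lift.tmul _ _).trans (congrArg Submodule.Quotient.mk ?_)
    ext <;> simp

end stmt12
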